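/- arXiv:1205.2140 — 2 statements merged into one kernel-verified Lean document; each statement's English description precedes it below -/
import Mathlib

section
/- Let R and S be unital subrings of ℚ. If R and S are isomorphic as rings, then R = S as subsets of ℚ. -/
lemma inv_den_mem (R : Subring ℚ) {q : ℚ} (hq : q ∈ R) : ((q.den : ℚ))⁻¹ ∈ R := by
  have hco : Int.gcd q.num q.den = 1 := q.reduced
  have h := Int.gcd_eq_gcd_ab q.num (q.den : ℤ)
  rw [hco] at h
  have hden : (q.den : ℚ) ≠ 0 := Nat.cast_ne_zero.mpr q.den_nz
  have h' : (q.num : ℚ) * (Int.gcdA q.num q.den : ℚ) + (q.den : ℚ) * (Int.gcdB q.num q.den : ℚ) = 1 := by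
    exact_mod_cast h.symm
  have key : ((q.den : ℚ))⁻¹ = (Int.gcdA q.num q.den : ℚ) * q + (Int.gcdB q.num q.den : ℚ) := by
    have hq' : (q.num : ℚ) = q * q.den := by
      rw [← div_eq_iff hden]; exact Rat.num_div_den q
    rw [hq'] at h'
    field_simp
    linarith [h']
  rw [key]
  exact R.add_mem (R.mul_mem (intCast_mem R _) hq) (intCast_mem R _)

lemma unit_of_dvd_den (R : Subring ℚ) {q : ℚ} (hq : q ∈ R) {p : ℕ} (hp : p.Prime)
    (hd : p ∣ q.den) : IsUnit ((p : ℕ) : R) := by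
  obtain ⟨k, hk⟩ := hd
  have hpne : (p : ℚ) ≠ 0 := Nat.cast_ne_zero.mpr hp.ne_zero
  have hkne : (k : ℚ) ≠ 0 := by
    intro h0
    have : k = 0 := Nat.cast_injective h0
    rw [this, mul_zero] at hk
    exact q.den_nz hk
  have hmem : ((p : ℚ))⁻¹ ∈ R := by
    have : ((p : ℚ))⁻¹ = (k : ℚ) * ((q.den : ℚ))⁻¹ := by
      rw [hk]; push_cast; field_simp
    rw [this]
    exact R.mul_mem (natCast_mem R _) (inv_den_mem R hq)
  refine isUnit_iff_exists.mpr ⟨⟨(p : ℚ)⁻¹, hmem⟩, ?_, ?_⟩ <;>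
  · apply Subtype.ext
    push_cast
    try field_simp

lemma mem_of_units (R : Subring ℚ) {q : ℚ}
    (h : ∀ p : ℕ, p.Prime → p ∣ q.den → IsUnit ((p : ℕ) : R)) : q ∈ R := by
  have main : ∀ n : ℕ, n ≠ 0 → (∀ p : ℕ, p.Prime → p ∣ n → IsUnit ((p : ℕ) : R)) →
      ((n : ℚ))⁻¹ ∈ R := by
    intro n
    induction n using Nat.strong_induction_on with
    | _ n ih =>
      intro hn hprimes
      rcases eq_or_ne n 1 with rfl | hn1
      · simpa using R.one_mem
      · obtain ⟨p, hp, hpd⟩ := Nat.exists_prime_and_dvd hn1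
        obtain ⟨m, hm⟩ := hpd
        have hm0 : m ≠ 0 := by rintro rfl; simp at hm; exact hn hm
        have hmlt : m < n := by
          rw [hm]
          exact lt_mul_of_one_lt_left (Nat.pos_of_ne_zero hm0) hp.one_lt
        have hminv : ((m : ℚ))⁻¹ ∈ R := by
          apply ih m hmlt hm0
          intro r hr hrd
          exact hprimes r hr (hrd.trans ⟨p, by rw [hm]; ring⟩)
        have hpu := hprimes p hp ⟨m, hm⟩
        obtain ⟨v, hv⟩ := isUnit_iff_exists.mp hpu
        have hpinv : ((p : ℚ))⁻¹ ∈ R := by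
          have hv1 : (p : ℚ) * (v : ℚ) = 1 := by
            have := congrArg (Subtype.val) hv.1
            push_cast at this
            exact_mod_cast this
          have hveq : (v : ℚ) = ((p : ℚ))⁻¹ := eq_inv_of_mul_eq_one_right ?_
          · rw [← hveq]; exact v.2
          · exact hv1
        have : ((n : ℚ))⁻¹ = ((p : ℚ))⁻¹ * ((m : ℚ))⁻¹ := by
          rw [hm]; push_cast; rw [mul_inv]
        rw [this]
        exact R.mul_mem hpinv hminv
  have hq : q = (q.num : ℚ) * ((q.den : ℚ))⁻¹ := by
    exact (Rat.num_div_den q).symm.trans (div_eq_mul_inv _ _)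
  rw [hq]
  exact R.mul_mem (intCast_mem R _) (main q.den q.den_nz h)

/-- Two unital subrings of `ℚ` that are isomorphic as rings are equal. -/
theorem stmt15 (R S : Subring ℚ) (e : Nonempty ((R : Type) ≃+* (S : Type))) : R = S := by
  obtain ⟨e⟩ := e
  have key : ∀ p : ℕ, IsUnit ((p : ℕ) : R) ↔ IsUnit ((p : ℕ) : S) := by
    intro p
    constructor
    · intro h
      have := h.map e.toRingHom
      rwa [map_natCast] at this
    · intro h
      have := h.map e.symm.toRingHom
      rwa [map_natCast] at this
  ext q
  constructor
  · intro hq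
    exact mem_of_units S fun p hp hd => (key p).mp (unit_of_dvd_den R hq hp hd)
  · intro hq
    exact mem_of_units R fun p hp hd => (key p).mpr (unit_of_dvd_den S hq hp hd)
end

section
/- Let R be a unital subring of ℚ and G an abelian group. G ⊗_ℤ R = 0 if and only if every element of G is annihilated by some product of primes invertible in R. -/
open TensorProduct

/-!
A subring `R` of `ℚ` is the localization of `ℤ` at the integers that become units in `R`: a
rational `a / b` in lowest terms lies in `R` only if `1 / b` does, by Bézout. Hence
`G ⊗[ℤ] R` is the localization of `G` at these integers and vanishes iff each element of `G`
is killed by one of them; an integer `n ≠ 0` is a unit of `R` iff all its prime factors are.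
-/

theorem isUnit_natCast_iff_forall_prime_dvd {A : Type*} [CommSemiring A] {n : ℕ} (hn : n ≠ 0) :
    IsUnit (n : A) ↔ ∀ p : ℕ, p.Prime → p ∣ n → IsUnit (p : A) := by
  refine ⟨fun h p _ hpn => isUnit_of_dvd_unit (Nat.cast_dvd_cast hpn) h, fun h => ?_⟩
  induction n using Nat.recOnMul with
  | zero => exact absurd rfl hn
  | one => simp
  | prime p hp => exact h p hp dvd_rfl
  | mul a b iha ihb =>
    obtain ⟨ha, hb⟩ := mul_ne_zero_iff.mp hn
    rw [Nat.cast_mul, IsUnit.mul_iff]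
    exact ⟨iha ha fun p hp hpa => h p hp (hpa.mul_right b),
      ihb hb fun p hp hpb => h p hp (hpb.mul_left a)⟩

theorem Subring.isUnit_iff_ne_zero_and_inv_mem {K : Type*} [Field K] {R : Subring K} (x : R) :
    IsUnit x ↔ x ≠ 0 ∧ (x : K)⁻¹ ∈ R := by
  constructor
  · intro h
    refine ⟨h.ne_zero, ?_⟩
    rw [inv_eq_of_mul_eq_one_right (congrArg Subtype.val h.mul_val_inv)]
    exact (↑h.unit⁻¹ : R).2
  · rintro ⟨hx, hinv⟩
    refine IsUnit.of_mul_eq_one ⟨_, hinv⟩ (Subtype.ext ?_)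
    exact mul_inv_cancel₀ (by exact_mod_cast hx)

theorem Subring.isUnit_natCast_iff {K : Type*} [Field K] [CharZero K] (R : Subring K) (n : ℕ) :
    IsUnit (n : R) ↔ n ≠ 0 ∧ ∀ q : ℕ, q.Prime → q ∣ n → (q : K)⁻¹ ∈ R := by
  rcases eq_or_ne n 0 with rfl | hn
  · simp
  · rw [isUnit_natCast_iff_forall_prime_dvd hn, and_iff_right hn]
    refine forall₂_congr fun p hp => imp_congr_right fun _ => ?_
    rw [Subring.isUnit_iff_ne_zero_and_inv_mem, and_iff_right (by exact_mod_cast hp.ne_zero),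
      Subring.coe_natCast]

theorem exists_isUnit_intCast_zsmul_eq_zero_iff {A G : Type*} [CommRing A] [AddCommGroup G]
    (g : G) :
    (∃ s : ℤ, IsUnit (s : A) ∧ s • g = 0) ↔ ∃ n : ℕ, IsUnit (n : A) ∧ n • g = 0 := by
  constructor
  · rintro ⟨s, hs, hsg⟩
    obtain ⟨t, ht⟩ := Int.dvd_natAbs.mpr (dvd_refl s)
    refine ⟨s.natAbs, isUnit_of_dvd_unit ?_ hs, ?_⟩
    · simpa using map_dvd (Int.castRingHom A) ((Int.natAbs_dvd (a := s)).mpr dvd_rfl)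
    · rw [← natCast_zsmul, ht, mul_comm, mul_smul, hsg, smul_zero]
  · rintro ⟨n, hn, hng⟩
    exact ⟨n, by simpa using hn, by simpa using hng⟩

theorem Subring.isUnit_den {R : Subring ℚ} {x : ℚ} (hx : x ∈ R) : IsUnit (x.den : R) := by
  obtain ⟨u, v, huv⟩ := x.isCoprime_num_den
  refine IsUnit.of_mul_eq_one (u * ⟨x, hx⟩ + v) (Subtype.ext ?_)
  have hnum : (x.num : ℚ) = x * x.den := (Rat.mul_den_eq_num x).symm
  have := congrArg (Int.cast : ℤ → ℚ) huv
  push_cast at this ⊢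
  rw [hnum] at this
  linear_combination this

theorem Subring.isLocalization_int (R : Subring ℚ) :
    IsLocalization ((IsUnit.submonoid R).comap (algebraMap ℤ R)) R where
  map_units s := s.2
  surj z :=
    ⟨⟨(z : ℚ).num, ⟨(z : ℚ).den, by simpa [IsUnit.mem_submonoid_iff] using isUnit_den z.2⟩⟩,
      Subtype.ext (by simp [Rat.mul_den_eq_num (z : ℚ)])⟩
  exists_of_eq h := ⟨1, by simpa using h⟩

/-- For a unital subring `R ⊆ ℚ` and an abelian group `G`, we have `G ⊗_ℤ R = 0` iff every
element of `G` is annihilated by some product of primes invertible in `R`. -/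
theorem stmt17 (R : Subring ℚ) (G : Type) [AddCommGroup G] :
    Subsingleton (G ⊗[ℤ] R) ↔
      ∀ g : G, ∃ n : ℕ, n ≠ 0 ∧ (∀ q : ℕ, q.Prime → q ∣ n → ((q : ℚ)⁻¹ ∈ R)) ∧ n • g = 0 := by
  let S := (IsUnit.submonoid R).comap (algebraMap ℤ R)
  have := Subring.isLocalization_int R
  have : IsLocalizedModule S (TensorProduct.mk ℤ R G 1) :=
    (isLocalizedModule_iff_isBaseChange S R _).mpr (TensorProduct.isBaseChange ℤ G R)
  rw [(TensorProduct.comm ℤ G R).toEquiv.subsingleton_congr,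
    IsLocalizedModule.subsingleton_iff S (TensorProduct.mk ℤ R G 1)]
  refine forall_congr' fun g => ?_
  simp only [S, Submonoid.mem_comap, IsUnit.mem_submonoid_iff, eq_intCast]
  rw [exists_isUnit_intCast_zsmul_eq_zero_iff]
  simp only [Subring.isUnit_natCast_iff, and_assoc]
end
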